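/- Let H be a Hopf algebra over a field k. For all a, b, c in H, the right adjoint action a ◁ b := S(b_{(1)}) a b_{(2)} satisfies the self-distributivity identity (a ◁ b) ◁ c = (a ◁ c_{(1)}) ◁ (b ◁ c_{(2)}). -/

import Mathlib

/-! Since `S` is an antihomomorphism, `◁` is a right action: `(a ◁ u) ◁ v = a ◁ (u v)`. Hence
`(a ◁ c₁) ◁ (b ◁ c₂) = a ◁ (c₁ (b ◁ c₂))`, and `c₁ (b ◁ c₂) = c₁ S(c₂) b c₃ = b c` because
coassociativity and the antipode axiom give `c₁ S(c₂) ⊗ c₃ = 1 ⊗ c`. So the right side is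
`a ◁ (b c) = (a ◁ b) ◁ c`. -/

open TensorProduct

set_option maxHeartbeats 1000000

variable (k : Type) [Field k]

/-- The right adjoint action `a ⊗ b ↦ S(b₁) a b₂` of a Hopf algebra on itself,
as a linear map `H ⊗ H →ₗ H`. -/
noncomputable def adAct (H : Type) [Ring H] [HopfAlgebra k H] :
    H ⊗[k] H →ₗ[k] H :=
  LinearMap.mul' k H ∘ₗ
    TensorProduct.map
      (LinearMap.mul' k H ∘ₗ
        TensorProduct.map (HopfAlgebra.antipode (R := k)) LinearMap.id ∘ₗ
        (TensorProduct.comm k H H).toLinearMap)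
      LinearMap.id ∘ₗ
    (TensorProduct.assoc k H H H).symm.toLinearMap ∘ₗ
    TensorProduct.map LinearMap.id (Coalgebra.comul (R := k) (A := H))

open Coalgebra HopfAlgebra

section AdjointAction

variable {k} {H : Type} [Ring H] [HopfAlgebra k H]

theorem adAct_tmul_eq_sum (a : H) {b : H} {ι : Type*} (r : Repr k b ι) :
    adAct k H (a ⊗ₜ[k] b) = ∑ i ∈ r.index, antipode k (r.left i) * a * r.right i := by
  simp [adAct, ← r.eq, tmul_sum, mul_assoc]

theorem adAct_adAct (a u v : H) :
    adAct k H (adAct k H (a ⊗ₜ[k] u) ⊗ₜ[k] v) = adAct k H (a ⊗ₜ[k] (u * v)) := by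
  rw [adAct_tmul_eq_sum a (ℛ k u), adAct_tmul_eq_sum a ((ℛ k u).mul (ℛ k v)), sum_tmul,
    map_sum, Repr.mul_index, Finset.sum_product]
  refine Finset.sum_congr rfl fun i _ => ?_
  rw [adAct_tmul_eq_sum _ (ℛ k v)]
  simp only [Repr.mul_left, Repr.mul_right, antipode_mul_antidistrib, mul_assoc]

theorem sum_mul_adAct_eq_mul (b : H) {c : H} {ι : Type*} (r : Repr k c ι) :
    ∑ i ∈ r.index, r.left i * adAct k H (b ⊗ₜ[k] r.right i) = b * c := by
  -- coassociativity `c₁₁ ⊗ c₁₂ ⊗ c₂ = c₁ ⊗ c₂₁ ⊗ c₂₂`, read through `x ⊗ y ⊗ z ↦ x (S y b z)`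
  have hcoassoc := congrArg
    (LinearMap.mul' k H ∘ₗ (LinearMap.mul' k H ∘ₗ
      (LinearMap.mulRight k b ∘ₗ antipode k).rTensor H).lTensor H)
    (sum_tmul_tmul_eq r (fun i => ℛ k (r.left i)) (fun i => ℛ k (r.right i)))
  simp only [map_sum, LinearMap.comp_apply, LinearMap.lTensor_tmul, LinearMap.rTensor_tmul,
    LinearMap.mulRight_apply, LinearMap.mul'_apply] at hcoassoc
  have hexpand : ∀ i ∈ r.index, r.left i * adAct k H (b ⊗ₜ[k] r.right i) =
      ∑ j ∈ (ℛ k (r.right i)).index,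
        r.left i * (antipode k ((ℛ k (r.right i)).left j) * b * (ℛ k (r.right i)).right j) :=
    fun i _ => by rw [adAct_tmul_eq_sum b (ℛ k (r.right i)), Finset.mul_sum]
  have hcounit : ∀ i ∈ r.index, ∑ j ∈ (ℛ k (r.left i)).index,
      (ℛ k (r.left i)).left j * (antipode k ((ℛ k (r.left i)).right j) * b * r.right i) =
        counit (R := k) (r.left i) • (b * r.right i) := fun i _ => by
    simp_rw [mul_assoc, ← mul_assoc ((ℛ k (r.left i)).left _)]
    rw [← Finset.sum_mul, sum_mul_antipode_eq_smul, smul_one_mul]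
  rw [Finset.sum_congr rfl hexpand, ← hcoassoc, Finset.sum_congr rfl hcounit]
  simp_rw [← mul_smul_comm, ← Finset.mul_sum, sum_counit_smul]

end AdjointAction

theorem adjoint_action_self_distributive (H : Type) [Ring H] [HopfAlgebra k H] :
    adAct k H ∘ₗ TensorProduct.map (adAct k H) (LinearMap.id (M := H)) =
      adAct k H ∘ₗ TensorProduct.map (adAct k H) (adAct k H) ∘ₗ
        (TensorProduct.tensorTensorTensorComm k H H H H).toLinearMap ∘ₗ
        TensorProduct.map (LinearMap.id (M := H ⊗[k] H))
          (Coalgebra.comul (R := k) (A := H)) := by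
  refine TensorProduct.ext_threefold fun a b c => ?_
  simp only [LinearMap.comp_apply, map_tmul, LinearMap.id_coe, id_eq, LinearEquiv.coe_coe]
  rw [← (ℛ k c).eq, tmul_sum, map_sum, map_sum, map_sum]
  simp only [tensorTensorTensorComm_tmul, map_tmul, adAct_adAct]
  rw [← map_sum, ← tmul_sum, sum_mul_adAct_eq_mul]
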